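/- arXiv:2006.10541 — 7 statements merged into one kernel-verified Lean document; each statement's English description precedes it below -/
import Mathlib

section
/- Let E be a Polish space equipped with its Borel σ-algebra, let (μ_n)_{n≥1} and μ be Borel probability measures on E such that μ_n converges weakly to μ. Let ℓ : E → ℝ be a continuous, bounded, nonnegative function with ∫ ℓ dμ > 0 and ∫ ℓ dμ_n > 0 for every n. Define the posteriors ν_n = Z_n⁻¹ • (μ_n.withDensity ℓ) with Z_n = ∫ ℓ dμ_n, and ν = Z⁻¹ • (μ.withDensity ℓ) with Z = ∫ ℓ dμ. Then each ν_n and ν are probability measures and ν_n converges weakly to ν. -/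
open MeasureTheory Filter Topology

lemma posterior_isProb {E : Type*} [TopologicalSpace E]
    [MeasurableSpace E] [BorelSpace E]
    (m : Measure E) [IsProbabilityMeasure m]
    (ℓ : E → ℝ) (hℓ0 : ∀ x, 0 ≤ ℓ x) (hℓint : Integrable ℓ m)
    (hZ : 0 < ∫ x, ℓ x ∂m) :
    IsProbabilityMeasure
      ((ENNReal.ofReal (∫ x, ℓ x ∂m))⁻¹ •
        m.withDensity fun x => ENNReal.ofReal (ℓ x)) := by
  have hl : ∫⁻ x, ENNReal.ofReal (ℓ x) ∂m = ENNReal.ofReal (∫ x, ℓ x ∂m) :=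
    (ofReal_integral_eq_lintegral_ofReal hℓint (ae_of_all _ hℓ0)).symm
  constructor
  rw [Measure.smul_apply, smul_eq_mul,
    withDensity_apply _ MeasurableSet.univ, setLIntegral_univ, hl]
  exact ENNReal.inv_mul_cancel (by simpa using hZ) ENNReal.ofReal_ne_top

lemma posterior_integral {E : Type*} [TopologicalSpace E]
    [MeasurableSpace E] [BorelSpace E]
    (m : Measure E)
    (ℓ : E → ℝ) (hℓc : Continuous ℓ) (hℓ0 : ∀ x, 0 ≤ ℓ x)
    (hZ : 0 < ∫ x, ℓ x ∂m) (h : E → ℝ) :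
    ∫ x, h x ∂((ENNReal.ofReal (∫ x, ℓ x ∂m))⁻¹ •
        m.withDensity fun x => ENNReal.ofReal (ℓ x)) =
      (∫ x, ℓ x ∂m)⁻¹ * ∫ x, ℓ x * h x ∂m := by
  have hmeas : Measurable fun x => (ℓ x).toNNReal :=
    measurable_real_toNNReal.comp hℓc.measurable
  rw [integral_smul_measure]
  rw [show (fun x => ENNReal.ofReal (ℓ x)) = fun x => ((ℓ x).toNNReal : ENNReal) from rfl]
  rw [integral_withDensity_eq_integral_smul hmeas]
  simp only [NNReal.smul_def, Real.coe_toNNReal _ (hℓ0 _)]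
  rw [ENNReal.toReal_inv, ENNReal.toReal_ofReal hZ.le, smul_eq_mul]
  simp [smul_eq_mul]

/-- **Proposition 2** (weak convergence of exact posteriors on a Polish space).
If priors `μ n` converge weakly to `μlim`, and `ℓ` is a continuous bounded nonnegative
likelihood with positive normalisers, then the posteriors are probability measures and
converge weakly to the limiting posterior. -/
theorem posterior_weak_convergence
    {E : Type*} [TopologicalSpace E] [PolishSpace E]
    [MeasurableSpace E] [BorelSpace E]
    (μ : ℕ → Measure E) (μlim : Measure E)
    [∀ n, IsProbabilityMeasure (μ n)] [IsProbabilityMeasure μlim]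
    (hweak : ∀ h : BoundedContinuousFunction E ℝ,
      Tendsto (fun n => ∫ x, h x ∂(μ n)) atTop (𝓝 (∫ x, h x ∂μlim)))
    (ℓ : E → ℝ) (hℓc : Continuous ℓ) (hℓ0 : ∀ x, 0 ≤ ℓ x)
    (hℓb : ∃ B : ℝ, ∀ x, ℓ x ≤ B)
    (hZ : 0 < ∫ x, ℓ x ∂μlim) (hZn : ∀ n, 0 < ∫ x, ℓ x ∂(μ n))
    (ν : ℕ → Measure E) (νlim : Measure E)
    (hν : ∀ n, ν n = (ENNReal.ofReal (∫ x, ℓ x ∂(μ n)))⁻¹ •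
      ((μ n).withDensity fun x => ENNReal.ofReal (ℓ x)))
    (hνlim : νlim = (ENNReal.ofReal (∫ x, ℓ x ∂μlim))⁻¹ •
      (μlim.withDensity fun x => ENNReal.ofReal (ℓ x))) :
    (∀ n, IsProbabilityMeasure (ν n)) ∧ IsProbabilityMeasure νlim ∧
      ∀ h : BoundedContinuousFunction E ℝ,
        Tendsto (fun n => ∫ x, h x ∂(ν n)) atTop (𝓝 (∫ x, h x ∂νlim)) := by
  obtain ⟨B, hB⟩ := hℓb
  have hbd : ∀ x y, dist (ℓ x) (ℓ y) ≤ B := by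
    intro x y
    rw [Real.dist_eq, abs_le]
    constructor <;> [skip; skip] <;>
      (have := hℓ0 x; have := hℓ0 y; have := hB x; have := hB y; linarith)
  set ℓB : BoundedContinuousFunction E ℝ := ⟨⟨ℓ, hℓc⟩, B, hbd⟩ with hℓB
  have hint : ∀ (m : Measure E) [IsProbabilityMeasure m], Integrable ℓ m := by
    intro m _; exact ℓB.integrable m
  refine ⟨fun n => (hν n) ▸ posterior_isProb (μ n) ℓ hℓ0 (hint _) (hZn n),
    hνlim ▸ posterior_isProb μlim ℓ hℓ0 (hint _) hZ, ?_⟩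
  intro h
  have key : ∀ n, ∫ x, h x ∂(ν n) = (∫ x, ℓ x ∂(μ n))⁻¹ * ∫ x, (ℓB * h) x ∂(μ n) := by
    intro n
    rw [hν n, posterior_integral (μ n) ℓ hℓc hℓ0 (hZn n)]
    rfl
  have keylim : ∫ x, h x ∂νlim = (∫ x, ℓ x ∂μlim)⁻¹ * ∫ x, (ℓB * h) x ∂μlim := by
    rw [hνlim, posterior_integral μlim ℓ hℓc hℓ0 hZ]
    rfl
  simp only [key, keylim]
  exact ((hweak ℓB).inv₀ hZ.ne').mul (hweak (ℓB * h))
end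

section
/- Let ι be a countable type and let E = ι → ℝ carry the product topology and its Borel σ-algebra (which coincides with the product σ-algebra). Let x : Fin m → ι be a finite tuple of points, let L : (Fin m → ℝ) → ℝ be a continuous, bounded, nonnegative function, and define the likelihood ℓ : E → ℝ by ℓ(f) = L(fun i => f (x i)). Let (μ_n) and μ be Borel probability measures on E with μ_n converging weakly to μ, ∫ ℓ dμ > 0, and ∫ ℓ dμ_n > 0 for every n. Then the posteriors ν_n = (∫ ℓ dμ_n)⁻¹ • (μ_n.withDensity ℓ) converge weakly to ν = (∫ ℓ dμ)⁻¹ • (μ.withDensity ℓ). -/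
/-!
The posterior expectation of `h` is the ratio `(∫ h ℓ dμ) / (∫ ℓ dμ)`. When `ℓ` is bounded and
continuous, so is `h ℓ` for every bounded continuous `h`, hence weak convergence of the priors
makes numerator and denominator converge, and the limit denominator is nonzero.
-/

open MeasureTheory Filter Topology

namespace MeasureTheory

variable {X : Type*} [MeasurableSpace X]

noncomputable def posterior (μ : Measure X) (ℓ : X → ℝ) : Measure X :=
  (ENNReal.ofReal (∫ x, ℓ x ∂μ))⁻¹ • μ.withDensity fun x => ENNReal.ofReal (ℓ x)

theorem integral_posterior (μ : Measure X) {ℓ : X → ℝ} (hℓm : Measurable ℓ) (hℓ0 : ∀ x, 0 ≤ ℓ x)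
    (h : X → ℝ) :
    ∫ x, h x ∂posterior μ ℓ = (∫ x, ℓ x ∂μ)⁻¹ * ∫ x, h x * ℓ x ∂μ := by
  rw [posterior, integral_smul_measure, ENNReal.toReal_inv,
    ENNReal.toReal_ofReal (integral_nonneg hℓ0),
    integral_withDensity_eq_integral_toReal_smul hℓm.ennreal_ofReal
      (ae_of_all _ fun _ => ENNReal.ofReal_lt_top)]
  simp only [ENNReal.toReal_ofReal (hℓ0 _), smul_eq_mul, mul_comm (ℓ _)]

theorem tendsto_integral_posterior [TopologicalSpace X] {α : Type*} {l : Filter α}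
    {μ : α → Measure X} {μlim : Measure X}
    (hweak : ∀ h : BoundedContinuousFunction X ℝ,
      Tendsto (fun n => ∫ x, h x ∂(μ n)) l (𝓝 (∫ x, h x ∂μlim)))
    (ℓ : BoundedContinuousFunction X ℝ) (hℓm : Measurable ℓ) (hℓ0 : ∀ x, 0 ≤ ℓ x)
    (hZ : ∫ x, ℓ x ∂μlim ≠ 0) (h : BoundedContinuousFunction X ℝ) :
    Tendsto (fun n => ∫ x, h x ∂posterior (μ n) ℓ) l (𝓝 (∫ x, h x ∂posterior μlim ℓ)) := by
  simp only [integral_posterior _ hℓm hℓ0]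
  exact ((hweak ℓ).inv₀ hZ).mul (hweak (h * ℓ))

end MeasureTheory

theorem function_space_posterior_weak_convergence_general
    {ι : Type*}
    (m : ℕ) (x : Fin m → ι)
    (L : (Fin m → ℝ) → ℝ) (hLc : Continuous L) (hL0 : ∀ v, 0 ≤ L v)
    (hLb : ∃ B : ℝ, ∀ v, L v ≤ B)
    (ℓ : (ι → ℝ) → ℝ) (hℓ : ∀ f, ℓ f = L (fun i => f (x i)))
    (μ : ℕ → Measure (ι → ℝ)) (μlim : Measure (ι → ℝ))
    (hweak : ∀ h : BoundedContinuousFunction (ι → ℝ) ℝ,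
      Tendsto (fun n => ∫ f, h f ∂(μ n)) atTop (𝓝 (∫ f, h f ∂μlim)))
    (hZ : 0 < ∫ f, ℓ f ∂μlim)
    (ν : ℕ → Measure (ι → ℝ)) (νlim : Measure (ι → ℝ))
    (hν : ∀ n, ν n = (ENNReal.ofReal (∫ f, ℓ f ∂(μ n)))⁻¹ •
      ((μ n).withDensity fun f => ENNReal.ofReal (ℓ f)))
    (hνlim : νlim = (ENNReal.ofReal (∫ f, ℓ f ∂μlim))⁻¹ •
      (μlim.withDensity fun f => ENNReal.ofReal (ℓ f))) :
    ∀ h : BoundedContinuousFunction (ι → ℝ) ℝ,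
      Tendsto (fun n => ∫ f, h f ∂(ν n)) atTop (𝓝 (∫ f, h f ∂νlim)) := by
  obtain ⟨B, hB⟩ := hLb
  obtain rfl : ℓ = fun f => L (fun i => f (x i)) := funext hℓ
  have hℓ0 (f : ι → ℝ) : 0 ≤ L (fun i => f (x i)) := hL0 _
  let ℓb : BoundedContinuousFunction (ι → ℝ) ℝ :=
    .ofNormedAddCommGroup _ (hLc.comp (continuous_pi fun i => continuous_apply (x i))) B
      fun f => (Real.norm_of_nonneg (hℓ0 f)).trans_le (hB _)
  -- Not via continuity: for uncountable `ι` the product σ-algebra is smaller than the Borel one.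
  have hℓm : Measurable ℓb :=
    hLc.measurable.comp (measurable_pi_lambda _ fun i => measurable_pi_apply (x i))
  obtain rfl : ν = fun n => posterior (μ n) ℓb := funext hν
  subst hνlim
  exact tendsto_integral_posterior hweak ℓb hℓm hℓ0 hZ.ne'

/-- **Proposition 2** in function-space form: the function space `E = ι → ℝ` (product
topology, product σ-algebra), the likelihood depends on `f` only through its values at the
finitely many training inputs `x 0, …, x (m-1)` via a continuous bounded nonnegative
function `L`.  Weak convergence of the priors implies weak convergence of the posteriors. -/
theorem function_space_posterior_weak_convergence
    {ι : Type*} [Countable ι]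
    (m : ℕ) (x : Fin m → ι)
    (L : (Fin m → ℝ) → ℝ) (hLc : Continuous L) (hL0 : ∀ v, 0 ≤ L v)
    (hLb : ∃ B : ℝ, ∀ v, L v ≤ B)
    (ℓ : (ι → ℝ) → ℝ) (hℓ : ∀ f, ℓ f = L (fun i => f (x i)))
    (μ : ℕ → Measure (ι → ℝ)) (μlim : Measure (ι → ℝ))
    [∀ n, IsProbabilityMeasure (μ n)] [IsProbabilityMeasure μlim]
    (hweak : ∀ h : BoundedContinuousFunction (ι → ℝ) ℝ,
      Tendsto (fun n => ∫ f, h f ∂(μ n)) atTop (𝓝 (∫ f, h f ∂μlim)))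
    (hZ : 0 < ∫ f, ℓ f ∂μlim) (hZn : ∀ n, 0 < ∫ f, ℓ f ∂(μ n))
    (ν : ℕ → Measure (ι → ℝ)) (νlim : Measure (ι → ℝ))
    (hν : ∀ n, ν n = (ENNReal.ofReal (∫ f, ℓ f ∂(μ n)))⁻¹ •
      ((μ n).withDensity fun f => ENNReal.ofReal (ℓ f)))
    (hνlim : νlim = (ENNReal.ofReal (∫ f, ℓ f ∂μlim))⁻¹ •
      (μlim.withDensity fun f => ENNReal.ofReal (ℓ f))) :
    ∀ h : BoundedContinuousFunction (ι → ℝ) ℝ,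
      Tendsto (fun n => ∫ f, h f ∂(ν n)) atTop (𝓝 (∫ f, h f ∂νlim)) :=
  function_space_posterior_weak_convergence_general m x L hLc hL0 hLb ℓ hℓ μ μlim hweak hZ ν νlim hν
    hνlim
end

section
/- Let E be a Polish space with its Borel σ-algebra, (μ_n) and μ Borel probability measures on E with μ_n converging weakly to μ, and ℓ : E → ℝ continuous, bounded, nonnegative with ∫ ℓ dμ > 0 and ∫ ℓ dμ_n > 0 for every n. Let h : E → ℝ be continuous, integrable with respect to each μ_n and with respect to μ, and such that ∫ |h| dμ_n → ∫ |h| dμ < ∞. Then ∫ h dν_n → ∫ h dν, where ν_n = (∫ ℓ dμ_n)⁻¹ • (μ_n.withDensity ℓ) and ν = (∫ ℓ dμ)⁻¹ • (μ.withDensity ℓ) are the induced posteriors. -/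
/-!
Truncating a continuous `f ≥ 0` at level `M` gives bounded continuous functions, so weak
convergence together with monotone convergence makes `μ ↦ ∫ f dμ` lower semicontinuous along
`μ n → μlim` (a Fatou lemma for weak convergence). If `|g| ≤ k` and `∫ k` converges, applying
this to `k + g` and `k - g` squeezes `∫ g` from both sides. With `g = ℓ h` and `k = B |h|` this gives
convergence of the numerators `∫ ℓ h dμ n` of the posterior means; the normalising constants
`∫ ℓ dμ n` converge by weak convergence alone.
-/

open MeasureTheory Filter Topology

section WeakConvergence

variable {E : Type*} [TopologicalSpace E] [MeasurableSpace E] [OpensMeasurableSpace E]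
  {μ : ℕ → Measure E} {μlim : Measure E}

theorem Continuous.integrable_of_abs_le {m : Measure E} {g k : E → ℝ} (hg : Continuous g)
    (hk : Integrable k m) (hgk : ∀ x, |g x| ≤ k x) : Integrable g m :=
  hk.mono' hg.aestronglyMeasurable (.of_forall hgk)

theorem Continuous.integrable_min_natCast {m : Measure E} {f : E → ℝ} (hf : Continuous f)
    (hf0 : ∀ x, 0 ≤ f x) (hfi : Integrable f m) (M : ℕ) :
    Integrable (fun x => min (f x) M) m :=
  (hf.min continuous_const).integrable_of_abs_le hfi fun x => by
    rw [abs_of_nonneg (le_min (hf0 x) M.cast_nonneg)]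
    exact min_le_left _ _

theorem tendsto_integral_min_natCast {m : Measure E} {f : E → ℝ} (hf : Continuous f)
    (hf0 : ∀ x, 0 ≤ f x) (hfi : Integrable f m) :
    Tendsto (fun M : ℕ => ∫ x, min (f x) M ∂m) atTop (𝓝 (∫ x, f x ∂m)) :=
  integral_tendsto_of_tendsto_of_monotone (hf.integrable_min_natCast hf0 hfi) hfi
    (.of_forall fun _ _ _ hab => min_le_min_left _ (Nat.cast_le.mpr hab))
    (.of_forall fun x => tendsto_atTop_of_eventually_const (i₀ := ⌈f x⌉₊) fun _ hM =>
      min_eq_left ((Nat.le_ceil _).trans (Nat.cast_le.mpr hM)))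

variable (hweak : ∀ g : BoundedContinuousFunction E ℝ,
    Tendsto (fun n => ∫ x, g x ∂(μ n)) atTop (𝓝 (∫ x, g x ∂μlim)))
include hweak

theorem eventually_lt_integral_of_lt_integral {f : E → ℝ} (hf : Continuous f) (hf0 : ∀ x, 0 ≤ f x)
    (hfi : ∀ n, Integrable f (μ n)) (hfilim : Integrable f μlim) {c : ℝ}
    (hc : c < ∫ x, f x ∂μlim) : ∀ᶠ n in atTop, c < ∫ x, f x ∂(μ n) := by
  obtain ⟨M, hM⟩ := ((tendsto_integral_min_natCast hf hf0 hfilim).eventually_const_lt hc).exists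
  let fM : BoundedContinuousFunction E ℝ :=
    .ofNormedAddCommGroup (fun x => min (f x) M) (hf.min continuous_const) M fun x => by
      rw [Real.norm_eq_abs, abs_of_nonneg (le_min (hf0 x) M.cast_nonneg)]
      exact min_le_right _ _
  filter_upwards [(hweak fM).eventually_const_lt hM] with n hn
  exact hn.trans_le (integral_mono (hf.integrable_min_natCast hf0 (hfi n) M) (hfi n)
    fun _ => min_le_left _ _)

variable {g k : E → ℝ} (hg : Continuous g) (hk : Continuous k) (hgk : ∀ x, |g x| ≤ k x)
  (hki : ∀ n, Integrable k (μ n)) (hkilim : Integrable k μlim)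
  (hkconv : Tendsto (fun n => ∫ x, k x ∂(μ n)) atTop (𝓝 (∫ x, k x ∂μlim)))
include hg hk hgk hki hkilim hkconv

theorem eventually_lt_integral_of_abs_le {c : ℝ} (hc : c < ∫ x, g x ∂μlim) :
    ∀ᶠ n in atTop, c < ∫ x, g x ∂(μ n) := by
  have hgi : ∀ m : Measure E, Integrable k m → Integrable g m := fun m hkm =>
    hg.integrable_of_abs_le hkm hgk
  have hintegral_add : ∀ m : Measure E, Integrable k m →
      ∫ x, (k + g) x ∂m = ∫ x, k x ∂m + ∫ x, g x ∂m := fun m hkm =>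
    integral_add hkm (hgi m hkm)
  obtain ⟨d, hcd, hd⟩ := exists_between hc
  have hlower : ∀ᶠ n in atTop, ∫ x, k x ∂μlim + d < ∫ x, (k + g) x ∂(μ n) :=
    eventually_lt_integral_of_lt_integral hweak (hk.add hg)
      (fun x => neg_le_iff_add_nonneg'.mp (abs_le.mp (hgk x)).1)
      (fun n => (hki n).add (hgi _ (hki n))) (hkilim.add (hgi _ hkilim))
      (by rw [hintegral_add μlim hkilim]; linarith)
  have hupper : ∀ᶠ n in atTop, ∫ x, k x ∂(μ n) < ∫ x, k x ∂μlim + (d - c) :=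
    hkconv.eventually_lt_const (by linarith)
  filter_upwards [hlower, hupper] with n hl hu
  rw [hintegral_add (μ n) (hki n)] at hl
  linarith

theorem tendsto_integral_of_abs_le :
    Tendsto (fun n => ∫ x, g x ∂(μ n)) atTop (𝓝 (∫ x, g x ∂μlim)) := by
  have hneg : ∀ x, |(-g) x| ≤ k x := fun x => by simpa using hgk x
  refine tendsto_order.2 ⟨fun c hc => eventually_lt_integral_of_abs_le hweak hg hk hgk hki hkilim
    hkconv hc, fun c hc => ?_⟩
  have := eventually_lt_integral_of_abs_le hweak hg.neg hk hneg hki hkilim hkconv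
    (c := -c) (by simpa [integral_neg] using hc)
  filter_upwards [this] with n hn
  simpa [integral_neg] using hn

end WeakConvergence

theorem integral_posterior {E : Type*} [MeasurableSpace E] {μ : Measure E} {ℓ : E → ℝ}
    (hℓ : AEMeasurable ℓ μ) (hℓ0 : ∀ x, 0 ≤ ℓ x) (h : E → ℝ) :
    ∫ x, h x ∂((ENNReal.ofReal (∫ x, ℓ x ∂μ))⁻¹ • μ.withDensity fun x => ENNReal.ofReal (ℓ x)) =
      (∫ x, ℓ x ∂μ)⁻¹ * ∫ x, ℓ x * h x ∂μ := by
  rw [integral_smul_measure, ENNReal.toReal_inv, ENNReal.toReal_ofReal (integral_nonneg hℓ0),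
    integral_withDensity_eq_integral_toReal_smul₀ hℓ.ennreal_ofReal
      (.of_forall fun _ => ENNReal.ofReal_lt_top)]
  simp only [ENNReal.toReal_ofReal (hℓ0 _), smul_eq_mul]

theorem posterior_integral_convergence_general
    {E : Type*} [TopologicalSpace E]
    [MeasurableSpace E] [BorelSpace E]
    (μ : ℕ → Measure E) (μlim : Measure E)
    (hweak : ∀ g : BoundedContinuousFunction E ℝ,
      Tendsto (fun n => ∫ x, g x ∂(μ n)) atTop (𝓝 (∫ x, g x ∂μlim)))
    (ℓ : E → ℝ) (hℓc : Continuous ℓ) (hℓ0 : ∀ x, 0 ≤ ℓ x)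
    (hℓb : ∃ B : ℝ, ∀ x, ℓ x ≤ B)
    (hZ : 0 < ∫ x, ℓ x ∂μlim)
    (h : E → ℝ) (hhc : Continuous h)
    (hhint : ∀ n, Integrable h (μ n)) (hhintlim : Integrable h μlim)
    (hhabs : Tendsto (fun n => ∫ x, |h x| ∂(μ n)) atTop (𝓝 (∫ x, |h x| ∂μlim)))
    (ν : ℕ → Measure E) (νlim : Measure E)
    (hν : ∀ n, ν n = (ENNReal.ofReal (∫ x, ℓ x ∂(μ n)))⁻¹ •
      ((μ n).withDensity fun x => ENNReal.ofReal (ℓ x)))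
    (hνlim : νlim = (ENNReal.ofReal (∫ x, ℓ x ∂μlim))⁻¹ •
      (μlim.withDensity fun x => ENNReal.ofReal (ℓ x))) :
    Tendsto (fun n => ∫ x, h x ∂(ν n)) atTop (𝓝 (∫ x, h x ∂νlim)) := by
  obtain ⟨B, hB⟩ := hℓb
  have hℓh_le : ∀ x, |ℓ x * h x| ≤ B * |h x| := fun x => by
    rw [abs_mul, abs_of_nonneg (hℓ0 x)]
    exact mul_le_mul_of_nonneg_right (hB x) (abs_nonneg _)
  have hnum : Tendsto (fun n => ∫ x, ℓ x * h x ∂(μ n)) atTop (𝓝 (∫ x, ℓ x * h x ∂μlim)) :=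
    tendsto_integral_of_abs_le (k := fun x => B * |h x|) hweak (hℓc.mul hhc)
      (continuous_const.mul hhc.abs) hℓh_le
      (fun n => (hhint n).abs.const_mul B) (hhintlim.abs.const_mul B)
      (by simpa only [integral_const_mul] using hhabs.const_mul B)
  have hZconv : Tendsto (fun n => ∫ x, ℓ x ∂(μ n)) atTop (𝓝 (∫ x, ℓ x ∂μlim)) :=
    hweak (.ofNormedAddCommGroup ℓ hℓc B fun x => by
      rw [Real.norm_eq_abs, abs_of_nonneg (hℓ0 x)]; exact hB x)
  simp only [hν, hνlim, integral_posterior hℓc.aemeasurable hℓ0]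
  exact (hZconv.inv₀ hZ.ne').mul hnum

/-- **Corollary 3**: convergence of posterior expectations of a possibly unbounded
continuous function `h`, given convergence of the prior expectations of `|h|`. -/
theorem posterior_integral_convergence
    {E : Type*} [TopologicalSpace E] [PolishSpace E]
    [MeasurableSpace E] [BorelSpace E]
    (μ : ℕ → Measure E) (μlim : Measure E)
    [∀ n, IsProbabilityMeasure (μ n)] [IsProbabilityMeasure μlim]
    (hweak : ∀ g : BoundedContinuousFunction E ℝ,
      Tendsto (fun n => ∫ x, g x ∂(μ n)) atTop (𝓝 (∫ x, g x ∂μlim)))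
    (ℓ : E → ℝ) (hℓc : Continuous ℓ) (hℓ0 : ∀ x, 0 ≤ ℓ x)
    (hℓb : ∃ B : ℝ, ∀ x, ℓ x ≤ B)
    (hZ : 0 < ∫ x, ℓ x ∂μlim) (hZn : ∀ n, 0 < ∫ x, ℓ x ∂(μ n))
    (h : E → ℝ) (hhc : Continuous h)
    (hhint : ∀ n, Integrable h (μ n)) (hhintlim : Integrable h μlim)
    (hhabs : Tendsto (fun n => ∫ x, |h x| ∂(μ n)) atTop (𝓝 (∫ x, |h x| ∂μlim)))
    (ν : ℕ → Measure E) (νlim : Measure E)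
    (hν : ∀ n, ν n = (ENNReal.ofReal (∫ x, ℓ x ∂(μ n)))⁻¹ •
      ((μ n).withDensity fun x => ENNReal.ofReal (ℓ x)))
    (hνlim : νlim = (ENNReal.ofReal (∫ x, ℓ x ∂μlim))⁻¹ •
      (μlim.withDensity fun x => ENNReal.ofReal (ℓ x))) :
    Tendsto (fun n => ∫ x, h x ∂(ν n)) atTop (𝓝 (∫ x, h x ∂νlim)) :=
  posterior_integral_convergence_general μ μlim hweak ℓ hℓc hℓ0 hℓb hZ h hhc hhint hhintlim hhabs ν
    νlim hν hνlim
end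

section
/- Let (Ω, 𝒜) be a measurable space, (μ_n) a sequence of probability measures on Ω, and for each n let ℓ_n : Ω → ℝ be measurable with 0 ≤ ℓ_n ≤ B for a fixed constant B, and with Z_n = ∫ ℓ_n dμ_n ≥ c for a fixed constant c > 0. Let T : Ω → ℝ be measurable with T² integrable under each μ_n and ∫ T² dμ_n → 0 as n → ∞. Then the pushforward under T of the posterior ν_n = Z_n⁻¹ • (μ_n.withDensity ℓ_n) converges weakly to the Dirac measure δ_0 on ℝ. -/
open MeasureTheory Filter Topology
open scoped ENNReal NNReal

/-- Abstraction of the mechanism behind **Proposition 4**: if the statistic `T` has second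
moment tending to `0` under the priors, the likelihoods are uniformly bounded, and the
normalising constants are bounded away from zero, then the pushforward under `T` of the
posteriors converges weakly to the Dirac measure at `0`. -/
theorem posterior_pushforward_tendsto_dirac
    {Ω : Type*} [MeasurableSpace Ω]
    (μ : ℕ → Measure Ω) [∀ n, IsProbabilityMeasure (μ n)]
    (ℓ : ℕ → Ω → ℝ) (B : ℝ) (hℓm : ∀ n, Measurable (ℓ n))
    (hℓ0 : ∀ n x, 0 ≤ ℓ n x) (hℓB : ∀ n x, ℓ n x ≤ B)
    (c : ℝ) (hc : 0 < c) (hZ : ∀ n, c ≤ ∫ x, ℓ n x ∂(μ n))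
    (T : Ω → ℝ) (hT : Measurable T)
    (hT2int : ∀ n, Integrable (fun x => (T x) ^ 2) (μ n))
    (hT2 : Tendsto (fun n => ∫ x, (T x) ^ 2 ∂(μ n)) atTop (𝓝 0))
    (ν : ℕ → Measure Ω)
    (hν : ∀ n, ν n = (ENNReal.ofReal (∫ x, ℓ n x ∂(μ n)))⁻¹ •
      ((μ n).withDensity fun x => ENNReal.ofReal (ℓ n x))) :
    ∀ h : BoundedContinuousFunction ℝ ℝ,
      Tendsto (fun n => ∫ y, h y ∂((ν n).map T)) atTop (𝓝 (h 0)) := by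
  intro h
  set Z : ℕ → ℝ := fun n => ∫ x, ℓ n x ∂(μ n) with hZdef
  have hZpos : ∀ n, 0 < Z n := fun n => hc.trans_le (hZ n)
  -- bounded measurable functions are integrable w.r.t. a probability measure
  have hint : ∀ (n : ℕ) (f : Ω → ℝ), Measurable f → ∀ C : ℝ, (∀ x, |f x| ≤ C) →
      Integrable f (μ n) := by
    intro n f hf C hC
    exact Integrable.mono' (integrable_const C) hf.aestronglyMeasurable
      (Filter.Eventually.of_forall fun x => by simpa [Real.norm_eq_abs] using hC x)
  have hℓint : ∀ n, Integrable (ℓ n) (μ n) := fun n =>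
    hint n (ℓ n) (hℓm n) B fun x => abs_le.2 ⟨by linarith [hℓ0 n x, hℓB n x], hℓB n x⟩
  have hBpos : 0 < B := by
    have h1 : Z 0 ≤ B := by
      have : ∫ x, ℓ 0 x ∂(μ 0) ≤ ∫ _, B ∂(μ 0) :=
        integral_mono (hℓint 0) (integrable_const B) fun x => hℓB 0 x
      simpa [hZdef] using this
    exact hc.trans_le ((hZ 0).trans h1)
  -- bound on oscillation of h
  have hhb : ∀ y : ℝ, |h y - h 0| ≤ 2 * ‖h‖ := fun y => by
    simpa [Real.dist_eq] using h.dist_le_two_norm y 0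
  have hhT : ∀ x, |h (T x)| ≤ ‖h‖ := fun x => by
    simpa [Real.norm_eq_abs] using h.norm_coe_le_norm (T x)
  -- key computation of the integral under the posterior
  have key : ∀ n, ∫ y, h y ∂((ν n).map T) = (Z n)⁻¹ * ∫ x, ℓ n x * h (T x) ∂(μ n) := by
    intro n
    rw [hν n, integral_map hT.aemeasurable h.continuous.aestronglyMeasurable,
      integral_smul_measure]
    have hwd : ((μ n).withDensity fun x => ENNReal.ofReal (ℓ n x)) =
        (μ n).withDensity fun x => ((ℓ n x).toNNReal : ℝ≥0∞) := rfl
    rw [hwd, integral_withDensity_eq_integral_smul (hℓm n).real_toNNReal]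
    have hfun : (fun x => (ℓ n x).toNNReal • h (T x)) = fun x => ℓ n x * h (T x) := by
      funext x
      simp [NNReal.smul_def, Real.coe_toNNReal _ (hℓ0 n x)]
    rw [hfun, ENNReal.toReal_inv, ENNReal.toReal_ofReal (hZpos n).le, smul_eq_mul]
  have hint1 : ∀ n, Integrable (fun x => ℓ n x * h (T x)) (μ n) := by
    intro n
    refine hint n _ ((hℓm n).mul (h.continuous.measurable.comp hT)) (B * ‖h‖) fun x => ?_
    rw [abs_mul]
    exact mul_le_mul (by rw [abs_of_nonneg (hℓ0 n x)]; exact hℓB n x) (hhT x)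
      (abs_nonneg _) hBpos.le
  have hint2 : ∀ n, Integrable (fun x => ℓ n x * (h (T x) - h 0)) (μ n) := by
    intro n
    refine hint n _ ((hℓm n).mul ((h.continuous.measurable.comp hT).sub measurable_const))
      (B * (2 * ‖h‖)) fun x => ?_
    rw [abs_mul]
    exact mul_le_mul (by rw [abs_of_nonneg (hℓ0 n x)]; exact hℓB n x) (hhb (T x))
      (abs_nonneg _) hBpos.le
  have keydiff : ∀ n, ∫ y, h y ∂((ν n).map T) - h 0 =
      (Z n)⁻¹ * ∫ x, ℓ n x * (h (T x) - h 0) ∂(μ n) := by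
    intro n
    have hsplit : ∫ x, ℓ n x * (h (T x) - h 0) ∂(μ n) =
        (∫ x, ℓ n x * h (T x) ∂(μ n)) - h 0 * Z n := by
      have : (fun x => ℓ n x * (h (T x) - h 0)) =
          fun x => ℓ n x * h (T x) - h 0 * ℓ n x := by funext x; ring
      rw [this, integral_sub (hint1 n) ((hℓint n).const_mul (h 0)), integral_const_mul]
    rw [key n, hsplit, mul_sub]
    have : (Z n)⁻¹ * (h 0 * Z n) = h 0 := by
      field_simp [(hZpos n).ne']
    rw [this]
  -- second moments are nonnegative
  have hInonneg : ∀ n, 0 ≤ ∫ x, (T x) ^ 2 ∂(μ n) := fun n =>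
    integral_nonneg fun x => sq_nonneg _
  -- now the limit
  rw [Metric.tendsto_nhds]
  intro ε hε
  set ε₁ : ℝ := ε * c / (2 * B) with hε₁def
  have hε₁pos : 0 < ε₁ := by positivity
  obtain ⟨δ, hδpos, hδ⟩ := Metric.continuous_iff.1 h.continuous 0 ε₁ hε₁pos
  set K : ℝ := 2 * ‖h‖ / δ ^ 2 with hKdef
  have hKnonneg : 0 ≤ K := by positivity
  -- pointwise bound
  have ptw : ∀ n x, |ℓ n x * (h (T x) - h 0)| ≤ B * ε₁ + (B * K) * (T x) ^ 2 := by
    intro n x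
    have habs : |ℓ n x * (h (T x) - h 0)| ≤ B * |h (T x) - h 0| := by
      rw [abs_mul]
      exact mul_le_mul_of_nonneg_right (by rw [abs_of_nonneg (hℓ0 n x)]; exact hℓB n x)
        (abs_nonneg _)
    have hd : |h (T x) - h 0| ≤ ε₁ + K * (T x) ^ 2 := by
      by_cases hx : |T x| < δ
      · have := hδ (T x) (by simpa [Real.dist_eq] using hx)
        rw [Real.dist_eq] at this
        nlinarith [sq_nonneg (T x), hKnonneg]
      · push_neg at hx
        have hsq : δ ^ 2 ≤ (T x) ^ 2 := by nlinarith [abs_nonneg (T x), sq_abs (T x)]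
        have h2 : 2 * ‖h‖ ≤ K * (T x) ^ 2 := by
          rw [hKdef]
          rw [div_mul_eq_mul_div, le_div_iff₀ (by positivity)]
          nlinarith [norm_nonneg h]
        linarith [hhb (T x)]
    calc |ℓ n x * (h (T x) - h 0)| ≤ B * |h (T x) - h 0| := habs
      _ ≤ B * (ε₁ + K * (T x) ^ 2) := mul_le_mul_of_nonneg_left hd hBpos.le
      _ = B * ε₁ + (B * K) * (T x) ^ 2 := by ring
  -- integral bound
  have ibound : ∀ n, |∫ x, ℓ n x * (h (T x) - h 0) ∂(μ n)| ≤
      B * ε₁ + (B * K) * ∫ x, (T x) ^ 2 ∂(μ n) := by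
    intro n
    calc |∫ x, ℓ n x * (h (T x) - h 0) ∂(μ n)|
        ≤ ∫ x, |ℓ n x * (h (T x) - h 0)| ∂(μ n) := by
          simpa only [Real.norm_eq_abs] using norm_integral_le_integral_norm (μ := μ n) fun x => ℓ n x * (h (T x) - h 0)
      _ ≤ ∫ x, (B * ε₁ + (B * K) * (T x) ^ 2) ∂(μ n) := by
          refine integral_mono (hint2 n).abs
            ((integrable_const _).add ((hT2int n).const_mul _)) fun x => ptw n x
      _ = B * ε₁ + (B * K) * ∫ x, (T x) ^ 2 ∂(μ n) := by
          rw [integral_add (integrable_const _) ((hT2int n).const_mul _),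
            integral_const, integral_const_mul]
          simp
  -- eventual smallness of the second-moment term
  have hsmall : ∀ᶠ n in atTop, c⁻¹ * ((B * K) * ∫ x, (T x) ^ 2 ∂(μ n)) < ε / 2 := by
    have htend : Tendsto (fun n => c⁻¹ * ((B * K) * ∫ x, (T x) ^ 2 ∂(μ n))) atTop (𝓝 0) := by
      have := (hT2.const_mul (B * K)).const_mul c⁻¹
      simpa using this
    exact htend.eventually_lt_const (half_pos hε)
  filter_upwards [hsmall] with n hn
  rw [Real.dist_eq, keydiff n]
  have hZinv : (Z n)⁻¹ ≤ c⁻¹ := by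
    apply inv_anti₀ hc (hZ n)
  have hSnonneg : 0 ≤ B * ε₁ + (B * K) * ∫ x, (T x) ^ 2 ∂(μ n) := by
    have := hInonneg n
    positivity
  have hstep : |(Z n)⁻¹ * ∫ x, ℓ n x * (h (T x) - h 0) ∂(μ n)| ≤
      c⁻¹ * (B * ε₁ + (B * K) * ∫ x, (T x) ^ 2 ∂(μ n)) := by
    rw [abs_mul, abs_of_nonneg (inv_nonneg.2 (hZpos n).le)]
    exact mul_le_mul hZinv (ibound n) (abs_nonneg _) (inv_nonneg.2 hc.le)
  have hhalf : c⁻¹ * (B * ε₁) = ε / 2 := by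
    rw [hε₁def]
    field_simp
  calc |(Z n)⁻¹ * ∫ x, ℓ n x * (h (T x) - h 0) ∂(μ n)|
      ≤ c⁻¹ * (B * ε₁ + (B * K) * ∫ x, (T x) ^ 2 ∂(μ n)) := hstep
    _ = ε / 2 + c⁻¹ * ((B * K) * ∫ x, (T x) ^ 2 ∂(μ n)) := by rw [mul_add, hhalf]
    _ < ε / 2 + ε / 2 := by linarith
    _ = ε := by ring
end

section
/- Let (Ω, 𝒜, P) be a probability space and n ≥ 1. Let w_1, …, w_n : Ω → ℝ be i.i.d. standard Gaussian random variables and g_1, …, g_n : Ω → ℝ random variables such that the vector (w_1,…,w_n) is independent of the vector (g_1,…,g_n), and suppose E[g_j^8] ≤ K for every j and some constant K < ∞. Then E[| n^{-1/2} Σ_{j=1}^n w_j g_j |^8] ≤ 105 · K. -/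
open MeasureTheory ProbabilityTheory Filter

/-! Conditionally on `g = y`, the sum `n^{-1/2} ∑ j, w j * y j` is a linear functional of the
standard Gaussian vector `w`, hence centred Gaussian with variance `|y|² / n`; its eighth moment
is `7‼ (|y|² / n)^4 = 105 (|y|² / n)^4`, and the power-mean inequality bounds `(|y|² / n)^4` by
`(1 / n) ∑ j, y j ^ 8`. Independence makes the law of `(w, g)` a product, so Tonelli integrates
this bound against the law of `g`. The even Gaussian moments `(2k - 1)‼` come from the
integration-by-parts recursion `E[X^(k+2)] = (k + 1) E[X^k]`. -/

open Real
open scoped Nat NNReal ENNReal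

lemma integrable_pow_mul_exp_neg_sq_div_two (k : ℕ) :
    Integrable fun x : ℝ ↦ x ^ k * exp (-x ^ 2 / 2) := by
  convert integrable_rpow_mul_exp_neg_mul_sq (b := 1 / 2) (by norm_num)
    (s := k) (by linarith [(Nat.cast_nonneg k : (0 : ℝ) ≤ k)]) using 2 with x
  rw [Real.rpow_natCast]
  ring_nf

lemma integral_pow_add_two_mul_exp_neg_sq_div_two (k : ℕ) :
    ∫ x : ℝ, x ^ (k + 2) * exp (-x ^ 2 / 2) = (k + 1) * ∫ x : ℝ, x ^ k * exp (-x ^ 2 / 2) := by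
  have hderiv (x : ℝ) : HasDerivAt (fun x ↦ x ^ (k + 1) * exp (-x ^ 2 / 2))
      ((k + 1) * (x ^ k * exp (-x ^ 2 / 2)) - x ^ (k + 2) * exp (-x ^ 2 / 2)) x := by
    refine ((hasDerivAt_pow (k + 1) x).fun_mul
      (((hasDerivAt_pow 2 x).fun_neg.div_const 2).exp)).congr_deriv ?_
    push_cast
    ring
  have hint := ((integrable_pow_mul_exp_neg_sq_div_two k).const_mul (k + 1 : ℝ)).sub
    (integrable_pow_mul_exp_neg_sq_div_two (k + 2))
  have := integral_eq_zero_of_hasDerivAt_of_integrable hderiv hint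
    (integrable_pow_mul_exp_neg_sq_div_two (k + 1))
  rw [integral_sub ((integrable_pow_mul_exp_neg_sq_div_two k).const_mul _)
    (integrable_pow_mul_exp_neg_sq_div_two _), integral_const_mul, sub_eq_zero] at this
  exact this.symm

lemma integral_pow_gaussianReal_zero_one_eq (k : ℕ) :
    ∫ x, x ^ k ∂gaussianReal 0 1 = (√(2 * π))⁻¹ * ∫ x : ℝ, x ^ k * exp (-x ^ 2 / 2) := by
  rw [integral_gaussianReal_eq_integral_smul one_ne_zero, ← integral_const_mul]
  simp only [gaussianPDFReal, smul_eq_mul, sub_zero, NNReal.coe_one, mul_one]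
  congr with x
  ring

lemma integral_pow_add_two_gaussianReal_zero_one (k : ℕ) :
    ∫ x, x ^ (k + 2) ∂gaussianReal 0 1 = (k + 1) * ∫ x, x ^ k ∂gaussianReal 0 1 := by
  rw [integral_pow_gaussianReal_zero_one_eq, integral_pow_gaussianReal_zero_one_eq,
    integral_pow_add_two_mul_exp_neg_sq_div_two]
  ring

lemma integral_pow_two_mul_gaussianReal_zero_one (k : ℕ) :
    ∫ x, x ^ (2 * k) ∂gaussianReal 0 1 = (2 * k - 1)‼ := by
  induction k with
  | zero => simp
  | succ k ih =>
    rw [mul_add, mul_one, integral_pow_add_two_gaussianReal_zero_one, ih]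
    rcases k with _ | k
    · simp
    · rw [show 2 * (k + 1) + 2 - 1 = 2 * k + 1 + 2 by omega,
        show 2 * (k + 1) - 1 = 2 * k + 1 by omega, Nat.doubleFactorial_add_two]
      push_cast
      ring

lemma integral_pow_two_mul_gaussianReal_zero (v : ℝ≥0) (k : ℕ) :
    ∫ x, x ^ (2 * k) ∂gaussianReal 0 v = (2 * k - 1)‼ * v ^ k := by
  have hmap : (gaussianReal 0 1).map (√v * ·) = gaussianReal 0 v := by
    rw [gaussianReal_map_const_mul]
    congr
    · simp
    · ext
      simp
  rw [← hmap, integral_map (by fun_prop) (by fun_prop)]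
  simp_rw [mul_pow, pow_mul, Real.sq_sqrt v.coe_nonneg, integral_const_mul, ← pow_mul,
    integral_pow_two_mul_gaussianReal_zero_one, mul_comm]

lemma integrable_pow_two_mul_gaussianReal (μ : ℝ) (v : ℝ≥0) (k : ℕ) :
    Integrable (fun x ↦ x ^ (2 * k)) (gaussianReal μ v) := by
  have : MemLp id (2 * k : ℕ) (gaussianReal μ v) := by
    exact_mod_cast memLp_id_gaussianReal (2 * k)
  simpa [(even_two_mul k).pow_abs] using this.integrable_norm_pow'

lemma map_pi_gaussianReal_sum_mul {ι : Type*} [Fintype ι] (a : ι → ℝ) :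
    (Measure.pi fun _ : ι ↦ gaussianReal 0 1).map (fun x ↦ ∑ i, a i * x i) =
      gaussianReal 0 (∑ i, a i ^ 2).toNNReal := by
  set L := innerSL ℝ (WithLp.toLp 2 a : EuclideanSpace ℝ ι)
  have hL : (fun x : ι → ℝ ↦ ∑ i, a i * x i) = L ∘ WithLp.toLp 2 := by
    ext x
    simp [L, PiLp.inner_apply, mul_comm]
  rw [hL, ← Measure.map_map L.continuous.measurable (by fun_prop), map_pi_eq_stdGaussian,
    IsGaussian.map_eq_gaussianReal, integral_strongDual_stdGaussian, variance_dual_stdGaussian,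
    innerSL_apply_norm, EuclideanSpace.real_norm_sq_eq]

lemma lintegral_sum_mul_pow_two_mul_pi_gaussianReal {ι : Type*} [Fintype ι] (a : ι → ℝ)
    (k : ℕ) :
    ∫⁻ x, ENNReal.ofReal ((∑ i, a i * x i) ^ (2 * k)) ∂Measure.pi (fun _ : ι ↦ gaussianReal 0 1) =
      ENNReal.ofReal ((2 * k - 1)‼ * (∑ i, a i ^ 2) ^ k) := by
  calc ∫⁻ x, ENNReal.ofReal ((∑ i, a i * x i) ^ (2 * k)) ∂Measure.pi (fun _ ↦ gaussianReal 0 1)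
      = ∫⁻ y, ENNReal.ofReal (y ^ (2 * k))
          ∂(Measure.pi fun _ : ι ↦ gaussianReal 0 1).map (fun x ↦ ∑ i, a i * x i) :=
        (lintegral_map (f := fun y ↦ ENNReal.ofReal (y ^ (2 * k))) (by fun_prop)
          (by fun_prop)).symm
    _ = ENNReal.ofReal ((2 * k - 1)‼ * (∑ i, a i ^ 2) ^ k) := by
      rw [map_pi_gaussianReal_sum_mul, ← ofReal_integral_eq_lintegral_ofReal
        (integrable_pow_two_mul_gaussianReal _ _ _)
        (ae_of_all _ fun y ↦ (even_two_mul k).pow_nonneg y),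
        integral_pow_two_mul_gaussianReal_zero, Real.coe_toNNReal _ (by positivity)]

lemma ProbabilityTheory.IndepFun.lintegral_comp_eq_lintegral_lintegral {Ω α β : Type*}
    [MeasurableSpace Ω] [MeasurableSpace α] [MeasurableSpace β] {P : Measure Ω}
    [IsFiniteMeasure P] {X : Ω → α} {Y : Ω → β}
    (hXY : IndepFun X Y P) (hX : Measurable X) (hY : Measurable Y) {F : α → β → ℝ≥0∞}
    (hF : Measurable (Function.uncurry F)) :
    ∫⁻ ω, F (X ω) (Y ω) ∂P = ∫⁻ y, ∫⁻ x, F x y ∂P.map X ∂P.map Y := by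
  calc ∫⁻ ω, F (X ω) (Y ω) ∂P
      = ∫⁻ z, Function.uncurry F z ∂P.map (fun ω ↦ (X ω, Y ω)) :=
        (lintegral_map hF (hX.prodMk hY)).symm
    _ = ∫⁻ z, Function.uncurry F z ∂(P.map X).prod (P.map Y) := by
      rw [(indepFun_iff_map_prod_eq_prod_map_map hX.aemeasurable hY.aemeasurable).1 hXY]
    _ = ∫⁻ y, ∫⁻ x, F x y ∂P.map X ∂P.map Y := lintegral_prod_symm _ hF.aemeasurable

lemma sum_inv_sqrt_card_mul_sq_pow_four_le {ι : Type*} [Fintype ι] (y : ι → ℝ) :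
    (∑ i, ((√(Fintype.card ι))⁻¹ * y i) ^ 2) ^ 4 ≤ (∑ i, y i ^ 8) / Fintype.card ι := by
  have hjensen := pow_sum_div_card_le_sum_pow (s := Finset.univ) (f := fun i ↦ y i ^ 2)
    (fun i _ ↦ sq_nonneg (y i)) 3
  simp_rw [mul_pow, inv_pow, Real.sq_sqrt (Nat.cast_nonneg _), ← Finset.mul_sum]
  calc ((Fintype.card ι : ℝ)⁻¹ * ∑ i, y i ^ 2) ^ 4
      = (∑ i, y i ^ 2) ^ (3 + 1) / Fintype.card ι ^ 3 / Fintype.card ι := by ring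
    _ ≤ (∑ i, y i ^ 8) / Fintype.card ι := by
      gcongr
      simpa [← pow_mul] using hjensen

lemma lintegral_pow_eight_inv_sqrt_card_mul_sum_pi_gaussianReal_le {ι : Type*} [Fintype ι]
    (y : ι → ℝ) :
    ∫⁻ x, ENNReal.ofReal (((√(Fintype.card ι))⁻¹ * ∑ i, x i * y i) ^ 8)
        ∂Measure.pi (fun _ : ι ↦ gaussianReal 0 1) ≤
      ENNReal.ofReal (105 * ((∑ i, y i ^ 8) / Fintype.card ι)) := by
  have hmoment := lintegral_sum_mul_pow_two_mul_pi_gaussianReal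
    (fun i ↦ (√(Fintype.card ι))⁻¹ * y i) 4
  simp_rw [Finset.mul_sum]
  calc _ = ENNReal.ofReal ((2 * 4 - 1)‼ * (∑ i, ((√(Fintype.card ι))⁻¹ * y i) ^ 2) ^ 4) := by
        rw [← hmoment]
        congr with x
        exact congr(ENNReal.ofReal ($(Finset.sum_congr rfl fun i _ ↦ by ring) ^ 8))
    _ ≤ ENNReal.ofReal (105 * ((∑ i, y i ^ 8) / Fintype.card ι)) := by
        gcongr
        · norm_num [Nat.doubleFactorial]
        · exact sum_inv_sqrt_card_mul_sq_pow_four_le y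

/-- The core estimate behind the strengthened Lemma 20 of Matthews et al.: if
`w 1, …, w n` are i.i.d. standard Gaussians, the vector `w` is independent of the vector
`g`, and `E[(g j)^8] ≤ K` for every `j`, then the eighth moment of the rescaled weighted
sum `n^{-1/2} ∑ j, w j * g j` is at most `105 * K` (the eighth moment of `N(0,σ²)` being
`105 σ^8`). -/
theorem eighth_moment_weighted_sum_bound
    {Ω : Type*} [MeasurableSpace Ω] (P : Measure Ω) [IsProbabilityMeasure P]
    (n : ℕ) (hn : 1 ≤ n)
    (w g : Fin n → Ω → ℝ)
    (hwm : ∀ j, Measurable (w j)) (hgm : ∀ j, Measurable (g j))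
    (hwlaw : ∀ j, P.map (w j) = gaussianReal 0 1)
    (hwiid : iIndepFun (m := fun _ : Fin n => (inferInstance : MeasurableSpace ℝ)) w P)
    (hindep : IndepFun (fun ω (j : Fin n) => w j ω) (fun ω (j : Fin n) => g j ω) P)
    (K : ℝ)
    (hgint : ∀ j, Integrable (fun ω => (g j ω) ^ 8) P)
    (hK : ∀ j, ∫ ω, (g j ω) ^ 8 ∂P ≤ K) :
    ∫ ω, |(Real.sqrt n)⁻¹ * ∑ j, w j ω * g j ω| ^ 8 ∂P ≤ 105 * K := by
  have hW : P.map (fun ω j ↦ w j ω) = Measure.pi fun _ ↦ gaussianReal 0 1 := by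
    simp_rw [hwiid.map_fun_eq_pi_map fun j ↦ (hwm j).aemeasurable, hwlaw]
  have hmean : ∫ ω, (∑ j, g j ω ^ 8) / n ∂P ≤ K := by
    rw [integral_div, integral_finsetSum _ fun j _ ↦ hgint j, div_le_iff₀ (by positivity),
      mul_comm]
    simpa using Finset.sum_le_card_nsmul Finset.univ _ K fun j _ ↦ hK j
  have hK0 : 0 ≤ K := (integral_nonneg fun ω ↦ by positivity).trans (hK ⟨0, hn⟩)
  -- Tonelli in `ℝ≥0∞` needs no a priori integrability of the eighth power.
  rw [integral_eq_lintegral_of_nonneg_ae (ae_of_all _ fun ω ↦ by positivity) (by fun_prop)]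
  refine ENNReal.toReal_le_of_le_ofReal (by positivity) ?_
  calc ∫⁻ ω, ENNReal.ofReal (|(√n)⁻¹ * ∑ j, w j ω * g j ω| ^ 8) ∂P
      = ∫⁻ y, ∫⁻ x, ENNReal.ofReal (((√n)⁻¹ * ∑ j, x j * y j) ^ 8)
          ∂P.map (fun ω j ↦ w j ω) ∂P.map (fun ω j ↦ g j ω) := by
        rw [← hindep.lintegral_comp_eq_lintegral_lintegral (by fun_prop) (by fun_prop)
          (by fun_prop)]
        simp_rw [(by decide : Even 8).pow_abs]
    _ ≤ ∫⁻ y, ENNReal.ofReal (105 * ((∑ j, y j ^ 8) / n)) ∂P.map (fun ω j ↦ g j ω) := by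
        rw [hW]
        gcongr with y
        simpa using lintegral_pow_eight_inv_sqrt_card_mul_sum_pi_gaussianReal_le y
    _ = ENNReal.ofReal (105 * ∫ ω, (∑ j, g j ω ^ 8) / n ∂P) := by
        rw [lintegral_map (by fun_prop) (by fun_prop), ← integral_const_mul,
          ofReal_integral_eq_lintegral_ofReal
            (((integrable_finsetSum _ fun j _ ↦ hgint j).div_const _).const_mul _)
            (ae_of_all _ fun ω ↦ by positivity)]
    _ ≤ ENNReal.ofReal (105 * K) := by gcongr
end

section
/- Let m, n be positive natural numbers, X : Matrix (Fin m) (Fin n) ℝ, and y : Fin m → ℝ. Set K = (n : ℝ)⁻¹ • (X * Xᵀ) and μ = (n : ℝ)⁻¹ • (Xᵀ.mulVec ((1 + K)⁻¹.mulVec y)). Then ‖μ‖₂ ≤ n^{-1/2} · √(‖K‖) · ‖y‖₂, where ‖·‖₂ denotes the Euclidean norm of a vector and ‖K‖ denotes the L² operator norm of the matrix K. -/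
/-!
Write `μ = n⁻¹ Xᵀ w` with `w = (1 + K)⁻¹ y`. Since `K` is positive semidefinite,
`‖v‖² ≤ re ⟪v, (1 + K) v⟫ ≤ ‖v‖ ‖(1 + K) v‖`, so `‖(1 + K)⁻¹‖ ≤ 1` and `‖w‖ ≤ ‖y‖`.
The C⋆-identity gives `‖Xᵀ‖ = √‖X Xᵀ‖ = √n · √‖K‖`.
-/

open Matrix WithLp
open scoped Matrix.Norms.L2Operator ComplexOrder InnerProductSpace

theorem EuclideanSpace.norm_toLp_eq_sqrt_sum_sq {ι : Type*} [Fintype ι] (v : ι → ℝ) :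
    ‖toLp 2 v‖ = √(∑ i, v i ^ 2) := by
  simp [EuclideanSpace.norm_eq, sq_abs]

theorem Matrix.l2_opNorm_conjTranspose_eq_sqrt {𝕜 m n : Type*} [RCLike 𝕜] [Fintype m]
    [Fintype n] [DecidableEq m] [DecidableEq n] (A : Matrix m n 𝕜) : ‖Aᴴ‖ = √‖A * Aᴴ‖ := by
  have h := l2_opNorm_conjTranspose_mul_self Aᴴ
  rw [conjTranspose_conjTranspose] at h
  rw [h, Real.sqrt_mul_self (norm_nonneg _)]

namespace Matrix.PosSemidef

variable {𝕜 ι : Type*} [RCLike 𝕜] [Fintype ι] [DecidableEq ι] {A : Matrix ι ι 𝕜}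

theorem norm_le_norm_one_add_mulVec (hA : A.PosSemidef) (v : EuclideanSpace 𝕜 ι) :
    ‖v‖ ≤ ‖toLp 2 ((1 + A) *ᵥ ofLp v)‖ := by
  have hquad : ‖v‖ ^ 2 ≤ RCLike.re ⟪v, toLp 2 ((1 + A) *ᵥ ofLp v)⟫_𝕜 := by
    have hA_v : 0 ≤ ⟪v, toLp 2 (A *ᵥ ofLp v)⟫_𝕜 := by
      rw [EuclideanSpace.inner_eq_star_dotProduct, dotProduct_comm]
      exact hA.dotProduct_mulVec_nonneg (ofLp v)
    rw [add_mulVec, one_mulVec, toLp_add, toLp_ofLp, inner_add_right, map_add,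
      inner_self_eq_norm_sq]
    exact le_add_of_nonneg_right (RCLike.nonneg_iff.mp hA_v).1
  have hcs : ‖v‖ * ‖v‖ ≤ ‖v‖ * ‖toLp 2 ((1 + A) *ᵥ ofLp v)‖ := by
    rw [← sq]
    exact hquad.trans ((RCLike.re_le_norm _).trans (norm_inner_le_norm _ _))
  rcases (norm_nonneg v).eq_or_lt with hv | hv
  · rw [← hv]
    exact norm_nonneg _
  · exact le_of_mul_le_mul_left hcs hv

theorem l2_opNorm_inv_one_add_le_one (hA : A.PosSemidef) : ‖(1 + A)⁻¹‖ ≤ 1 := by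
  have hunit : IsUnit (1 + A) := (PosDef.one.add_posSemidef hA).isUnit
  rw [l2_opNorm_def]
  refine ContinuousLinearMap.opNorm_le_bound _ zero_le_one fun y => ?_
  have h := hA.norm_le_norm_one_add_mulVec (toLp 2 ((1 + A)⁻¹ *ᵥ ofLp y))
  rwa [ofLp_toLp, mulVec_mulVec, mul_nonsing_inv _ ((isUnit_iff_isUnit_det _).mp hunit),
    one_mulVec, toLp_ofLp, ← one_mul ‖y‖] at h

end Matrix.PosSemidef

theorem posterior_mean_norm_bound_general
    (m n : ℕ)
    (X : Matrix (Fin m) (Fin n) ℝ) (y : Fin m → ℝ)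
    (K : Matrix (Fin m) (Fin m) ℝ) (hK : K = (n : ℝ)⁻¹ • (X * Xᵀ))
    (μ : Fin n → ℝ)
    (hμ : μ = (n : ℝ)⁻¹ • (Xᵀ.mulVec (((1 : Matrix (Fin m) (Fin m) ℝ) + K)⁻¹.mulVec y))) :
    Real.sqrt (∑ i, μ i ^ 2) ≤
      (Real.sqrt n)⁻¹ * Real.sqrt ‖K‖ * Real.sqrt (∑ i, y i ^ 2) := by
  have hn_inv : 0 ≤ (n : ℝ)⁻¹ := inv_nonneg.mpr n.cast_nonneg
  have hK_psd : K.PosSemidef := by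
    simpa [hK] using (posSemidef_self_mul_conjTranspose X).smul hn_inv
  have hK_norm : √‖K‖ = (√n)⁻¹ * ‖Xᵀ‖ := by
    rw [hK, norm_smul, Real.sqrt_mul (norm_nonneg _), Real.norm_of_nonneg hn_inv, Real.sqrt_inv,
      ← conjTranspose_eq_transpose_of_trivial, l2_opNorm_conjTranspose_eq_sqrt]
  have hsqrt_inv : (√n)⁻¹ * (√n)⁻¹ = (n : ℝ)⁻¹ := by
    rw [← mul_inv, Real.mul_self_sqrt n.cast_nonneg]
  rw [← EuclideanSpace.norm_toLp_eq_sqrt_sum_sq, ← EuclideanSpace.norm_toLp_eq_sqrt_sum_sq, hμ,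
    hK_norm]
  calc ‖toLp 2 ((n : ℝ)⁻¹ • (Xᵀ *ᵥ ((1 + K)⁻¹ *ᵥ y)))‖
      = (n : ℝ)⁻¹ * ‖toLp 2 ((Xᵀ * (1 + K)⁻¹) *ᵥ y)‖ := by
        rw [toLp_smul, norm_smul, Real.norm_of_nonneg hn_inv, mulVec_mulVec]
    _ ≤ (n : ℝ)⁻¹ * (‖Xᵀ‖ * ‖(1 + K)⁻¹‖ * ‖toLp 2 y‖) := by
        gcongr
        exact (l2_opNorm_mulVec _ _).trans (by gcongr; exact l2_opNorm_mul _ _)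
    _ ≤ (n : ℝ)⁻¹ * (‖Xᵀ‖ * 1 * ‖toLp 2 y‖) := by
        gcongr
        exact hK_psd.l2_opNorm_inv_one_add_le_one
    _ = (√n)⁻¹ * ((√n)⁻¹ * ‖Xᵀ‖) * ‖toLp 2 y‖ := by
        rw [← hsqrt_inv]
        ring

/-- The bound from **Example 1** on the posterior mean of Bayesian linear regression:
with `K = (1/n)·XXᵀ` and `μ = (1/n)·Xᵀ(I + K)⁻¹y`, the Euclidean norm of `μ` is at most
`n^{-1/2}·√‖K‖·‖y‖₂`, where `‖K‖` is the L² operator norm of `K`. -/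
theorem posterior_mean_norm_bound
    (m n : ℕ) (hm : 0 < m) (hn : 0 < n)
    (X : Matrix (Fin m) (Fin n) ℝ) (y : Fin m → ℝ)
    (K : Matrix (Fin m) (Fin m) ℝ) (hK : K = (n : ℝ)⁻¹ • (X * Xᵀ))
    (μ : Fin n → ℝ)
    (hμ : μ = (n : ℝ)⁻¹ • (Xᵀ.mulVec (((1 : Matrix (Fin m) (Fin m) ℝ) + K)⁻¹.mulVec y))) :
    Real.sqrt (∑ i, μ i ^ 2) ≤
      (Real.sqrt n)⁻¹ * Real.sqrt ‖K‖ * Real.sqrt (∑ i, y i ^ 2) :=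
  posterior_mean_norm_bound_general m n X y K hK μ hμ
end

section
/- Let m, n be positive natural numbers and X : Matrix (Fin m) (Fin n) ℝ. Set Σ = ((n : ℝ) • 1 + Xᵀ * X)⁻¹ (an n×n positive definite matrix), K = (n : ℝ)⁻¹ • (X * Xᵀ), and let λ_max ≥ 0 denote the largest eigenvalue of the positive semidefinite m×m matrix K. Then trace((n : ℝ)⁻¹ • 1 + Σ − (2/√n) • Σ^{1/2}) ≤ (m/n) · (1 − (1 + λ_max)^{-1/2})², where Σ^{1/2} denotes the positive semidefinite square root of Σ. -/
open Matrix

/-- The positive semidefinite square root of a positive semidefinite matrix, as defined in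
the older Mathlib (`Matrix.PosSemidef.sqrt`, since removed in favour of `CFC.sqrt`). -/
noncomputable def Matrix.PosSemidef.sqrt {n : Type*} [Fintype n] [DecidableEq n]
    {A : Matrix n n ℝ} (hA : A.PosSemidef) : Matrix n n ℝ :=
  (hA.1.eigenvectorUnitary : Matrix n n ℝ) * diagonal ((↑) ∘ Real.sqrt ∘ hA.1.eigenvalues) *
    (star (hA.1.eigenvectorUnitary : Matrix n n ℝ))

/-!
With `A = XᵀX`, the matrix inside the trace is `f(A)` for `f μ = (1/√n - 1/√(n + μ))²`, so its
trace is `∑ᵢ f(μᵢ)` over the eigenvalues `μᵢ` of `A`. Since `f 0 = 0`, only the nonzero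
eigenvalues count, and there are `rank X ≤ m` of them. A nonzero eigenvalue of `XᵀX` is one of
`XXᵀ`, hence at most `n λ_max`, and `f` is increasing, so each term is at most
`f (n λ_max) = (1/n) (1 - (1 + λ_max)^{-1/2})²`.
-/

open Finset

theorem inv_sqrt_sub_inv_sqrt_sq {a b : ℝ} (ha : 0 ≤ a) (hb : 0 ≤ b) :
    ((√a)⁻¹ - (√b)⁻¹) ^ 2 = a⁻¹ + b⁻¹ - 2 / √a * √b⁻¹ := by
  rw [sub_sq, inv_pow, inv_pow, Real.sq_sqrt ha, Real.sq_sqrt hb, Real.sqrt_inv]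
  ring

theorem inv_sqrt_sub_inv_sqrt_add_sq_le {c μ L : ℝ} (hc : 0 < c) (hμ : 0 ≤ μ)
    (hμL : μ ≤ c * L) :
    ((√c)⁻¹ - (√(c + μ))⁻¹) ^ 2 ≤ c⁻¹ * (1 - (√(1 + L))⁻¹) ^ 2 := by
  have hle : (√(c + μ))⁻¹ ≤ (√c)⁻¹ :=
    inv_anti₀ (Real.sqrt_pos.2 hc) (Real.sqrt_le_sqrt (by linarith))
  have hge : (√(c * (1 + L)))⁻¹ ≤ (√(c + μ))⁻¹ :=
    inv_anti₀ (Real.sqrt_pos.2 (by linarith)) (Real.sqrt_le_sqrt (by linarith))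
  calc ((√c)⁻¹ - (√(c + μ))⁻¹) ^ 2 ≤ ((√c)⁻¹ - (√(c * (1 + L)))⁻¹) ^ 2 :=
        pow_le_pow_left₀ (sub_nonneg.2 hle) (by linarith) 2
    _ = c⁻¹ * (1 - (√(1 + L))⁻¹) ^ 2 := by
        rw [Real.sqrt_mul hc.le, mul_inv, ← mul_one_sub, mul_pow, inv_pow, Real.sq_sqrt hc.le]

namespace Matrix

theorem mem_spectrum_mul_comm {K m n : Type*} [Field K] [Fintype m] [Fintype n]
    [DecidableEq m] [DecidableEq n] (A : Matrix m n K) (B : Matrix n m K) {r : K} (hr : r ≠ 0)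
    (h : r ∈ spectrum K (A * B)) : r ∈ spectrum K (B * A) := by
  rw [mem_spectrum_iff_isRoot_charpoly] at h ⊢
  have hchar := congrArg (Polynomial.eval r) (charpoly_mul_comm' A B)
  simp only [Polynomial.eval_mul, Polynomial.eval_pow, Polynomial.eval_X, h.eq_zero,
    mul_zero] at hchar
  exact (mul_eq_zero.mp hchar.symm).resolve_left (pow_ne_zero _ hr)

section FunctionalCalculus

open scoped MatrixOrder

variable {ι : Type*} [Fintype ι] [DecidableEq ι] {A : Matrix ι ι ℝ}

theorem PosSemidef.sqrt_eq_cfc (hA : A.PosSemidef) : hA.sqrt = cfc Real.sqrt A := by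
  rw [hA.1.cfc_eq]
  rfl

theorem IsHermitian.trace_cfc (hA : A.IsHermitian) (f : ℝ → ℝ) :
    (cfc f A).trace = ∑ i, f (hA.eigenvalues i) := by
  rw [hA.cfc_eq, IsHermitian.cfc, Unitary.conjStarAlgAut_apply, trace_mul_cycle,
    Unitary.coe_star_mul_self, one_mul, trace_diagonal]
  rfl

theorem IsHermitian.continuousOn_spectrum (hA : A.IsHermitian) (f : ℝ → ℝ) :
    ContinuousOn f (spectrum ℝ A) :=
  (hA.spectrum_real_eq_range_eigenvalues ▸ Set.finite_range _).continuousOn f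

theorem PosSemidef.inv_smul_one_add_eq_cfc (hA : A.PosSemidef) {c : ℝ} (hc : 0 < c) :
    (c • 1 + A)⁻¹ = cfc (fun x ↦ (c + x)⁻¹) A := by
  have hne : ∀ x ∈ spectrum ℝ A, c + x ≠ 0 := fun x hx ↦
    (add_pos_of_pos_of_nonneg hc (spectrum_nonneg_of_nonneg hA.nonneg hx)).ne'
  rw [cfc_inv (fun x ↦ c + x) A hne, cfc_const_add c (fun x ↦ x) A, cfc_id' ℝ A,
    nonsing_inv_eq_ringInverse, Algebra.algebraMap_eq_smul_one]

theorem PosSemidef.trace_inv_smul_add_inv_sub_sqrt (hA : A.PosSemidef) {c : ℝ} (hc : 0 < c)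
    (hS : (c • 1 + A)⁻¹.PosSemidef) :
    trace (c⁻¹ • 1 + (c • 1 + A)⁻¹ - (2 / √c) • hS.sqrt) =
      ∑ i, ((√c)⁻¹ - (√(c + hA.1.eigenvalues i))⁻¹) ^ 2 := by
  have hcfc : c⁻¹ • 1 + (c • 1 + A)⁻¹ - (2 / √c) • hS.sqrt =
      cfc (fun y ↦ c⁻¹ + y - 2 / √c * √y) (c • 1 + A)⁻¹ := by
    rw [hS.sqrt_eq_cfc, cfc_sub .., cfc_const_add .., cfc_const_mul .., cfc_id' ..,
      Algebra.algebraMap_eq_smul_one]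
  rw [hcfc, hA.inv_smul_one_add_eq_cfc hc, ← cfc_comp _ _ A (hf := hA.1.continuousOn_spectrum _),
    hA.1.trace_cfc]
  exact sum_congr rfl fun i _ ↦
    (inv_sqrt_sub_inv_sqrt_sq hc.le (add_nonneg hc.le (hA.eigenvalues_nonneg i))).symm

end FunctionalCalculus

theorem card_eigenvalues_transpose_mul_self_ne_zero_le {m n : Type*} [Fintype m] [Fintype n]
    [DecidableEq n] (X : Matrix m n ℝ) (hA : (Xᵀ * X).IsHermitian) :
    #{i | hA.eigenvalues i ≠ 0} ≤ Fintype.card m := by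
  rw [← Fintype.card_subtype, ← hA.rank_eq_card_non_zero_eigs, rank_transpose_mul_self]
  exact X.rank_le_card_height

theorem eigenvalues_transpose_mul_self_le_of_ne_zero {m n : Type*} [Fintype m] [Fintype n]
    [DecidableEq m] [DecidableEq n] (X : Matrix m n ℝ) {c L : ℝ} (hc : 0 < c)
    (hA : (Xᵀ * X).IsHermitian) (hK : (c⁻¹ • (X * Xᵀ)).IsHermitian)
    (hL : IsGreatest (Set.range hK.eigenvalues) L) {i : n} (hi : hA.eigenvalues i ≠ 0) :
    hA.eigenvalues i ≤ c * L := by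
  have hXXt : hA.eigenvalues i ∈ spectrum ℝ (X * Xᵀ) :=
    mem_spectrum_mul_comm Xᵀ X hi (hA.eigenvalues_mem_spectrum_real i)
  have hK_mem : c⁻¹ * hA.eigenvalues i ∈ spectrum ℝ (c⁻¹ • (X * Xᵀ)) :=
    (spectrum.smul_mem_smul_iff (r := Units.mk0 c⁻¹ (by positivity))).2 hXXt
  obtain ⟨j, hj⟩ := hK.spectrum_real_eq_range_eigenvalues ▸ hK_mem
  rw [← inv_mul_le_iff₀ hc, ← hj]
  exact hL.2 ⟨j, rfl⟩

end Matrix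

theorem wasserstein_trace_bound_general
    (m n : ℕ) (hn : 0 < n) (X : Matrix (Fin m) (Fin n) ℝ)
    (hS : (((n : ℝ) • (1 : Matrix (Fin n) (Fin n) ℝ) + Xᵀ * X)⁻¹).PosSemidef)
    (hK : ((n : ℝ)⁻¹ • (X * Xᵀ)).PosSemidef)
    (lmax : ℝ)
    (hlmax : IsGreatest (Set.range hK.1.eigenvalues) lmax) :
    Matrix.trace
        ((n : ℝ)⁻¹ • (1 : Matrix (Fin n) (Fin n) ℝ) +
          ((n : ℝ) • (1 : Matrix (Fin n) (Fin n) ℝ) + Xᵀ * X)⁻¹ -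
          (2 / Real.sqrt n) • hS.sqrt) ≤
      ((m : ℝ) / n) * (1 - (Real.sqrt (1 + lmax))⁻¹) ^ 2 := by
  have hc : (0 : ℝ) < n := Nat.cast_pos.2 hn
  have hA : (Xᵀ * X).PosSemidef := by simpa using posSemidef_conjTranspose_mul_self X
  set μ := hA.1.eigenvalues
  set t := (1 - (√(1 + lmax))⁻¹) ^ 2
  rw [hA.trace_inv_smul_add_inv_sub_sqrt hc hS]
  calc ∑ i, ((√n)⁻¹ - (√(n + μ i))⁻¹) ^ 2
      = ∑ i with μ i ≠ 0, ((√n)⁻¹ - (√(n + μ i))⁻¹) ^ 2 := by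
        rw [sum_filter_of_ne]
        intro i _ hi h0
        simp [h0] at hi
    _ ≤ #{i | μ i ≠ 0} • ((n : ℝ)⁻¹ * t) :=
        sum_le_card_nsmul _ _ _ fun i hi ↦ inv_sqrt_sub_inv_sqrt_add_sq_le hc
          (hA.eigenvalues_nonneg i)
          (X.eigenvalues_transpose_mul_self_le_of_ne_zero hc hA.1 hK.1 hlmax (mem_filter.1 hi).2)
    _ ≤ m • ((n : ℝ)⁻¹ * t) := by
        gcongr
        simpa using X.card_eigenvalues_transpose_mul_self_ne_zero_le hA.1
    _ = m / n * t := by rw [nsmul_eq_mul]; ring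

/-- The trace bound from **Example 1** controlling the covariance contribution to the
squared 2-Wasserstein distance between the Bayesian linear regression posterior
`N(μ_n, S)` with `S = (n·I + XᵀX)⁻¹` and the prior `N(0, (1/n)·I)`:
`trace((1/n)·I + S − (2/√n)·S^{1/2}) ≤ (m/n)·(1 − (1 + λ_max)^{-1/2})²`,
where `λ_max ≥ 0` is the largest eigenvalue of the PSD matrix `K = (1/n)·XXᵀ` and
`S^{1/2}` is the positive semidefinite square root of `S`. -/
theorem wasserstein_trace_bound
    (m n : ℕ) (hm : 0 < m) (hn : 0 < n) (X : Matrix (Fin m) (Fin n) ℝ)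
    (hS : (((n : ℝ) • (1 : Matrix (Fin n) (Fin n) ℝ) + Xᵀ * X)⁻¹).PosSemidef)
    (hK : ((n : ℝ)⁻¹ • (X * Xᵀ)).PosSemidef)
    (lmax : ℝ) (hlmax0 : 0 ≤ lmax)
    (hlmax : IsGreatest (Set.range hK.1.eigenvalues) lmax) :
    Matrix.trace
        ((n : ℝ)⁻¹ • (1 : Matrix (Fin n) (Fin n) ℝ) +
          ((n : ℝ) • (1 : Matrix (Fin n) (Fin n) ℝ) + Xᵀ * X)⁻¹ -
          (2 / Real.sqrt n) • hS.sqrt) ≤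
      ((m : ℝ) / n) * (1 - (Real.sqrt (1 + lmax))⁻¹) ^ 2 :=
  wasserstein_trace_bound_general m n hn X hS hK lmax hlmax
end
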